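/- (Theorem 1, uniqueness) Suppose γ_r > 0 and γ_c > 0. Then F has a unique global minimizer over ℝ^{n×p} if and only if Assumption 1 holds. -/

import Mathlib

/-!
`F` is a convex quadratic whose quadratic part is `Q = objF Ω 0`, and `Q D = 0` exactly when `D`
vanishes on `Ω` and its rows (columns) are constant along the row (column) graph, i.e. when `D`
is constant on every bicluster `A_r × B_c` and zero on those meeting `Ω`. If some bicluster misses
`Ω`, adding its indicator to a minimizer leaves `F` unchanged, so minimizers are not unique.
Otherwise `Q` is positive definite, hence `F` is coercive and attains its minimum, and the
parallelogram identity `F Z₁ + F Z₂ = 2 F ((Z₁ + Z₂) / 2) + Q (Z₁ - Z₂) / 2` forces two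
minimizers to coincide.
-/

open Matrix BigOperators Finset

/-- The graph on `Fin n` with `i ~ j` iff `i ≠ j` and `w i j > 0` (for symmetric `w`). -/
def graphOf {n : ℕ} (w : Fin n → Fin n → ℝ) : SimpleGraph (Fin n) :=
  SimpleGraph.fromRel (fun i j => 0 < w i j)

/-- The 0/1 indicator vector of a subset. -/
noncomputable def chi {n : ℕ} (A : Set (Fin n)) : Fin n → ℝ :=
  A.indicator (fun _ => (1 : ℝ))

/-- The BMC smoothing penalty
`J(Z) = (γr/2) ∑_{i<j} w i j ‖Z_{i·} - Z_{j·}‖² + (γc/2) ∑_{i<j} w̃ i j ‖Z_{·i} - Z_{·j}‖²`. -/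
noncomputable def Jpen {n p : ℕ} (γr γc : ℝ) (w : Fin n → Fin n → ℝ)
    (wt : Fin p → Fin p → ℝ) (Z : Matrix (Fin n) (Fin p) ℝ) : ℝ :=
  γr / 2 * ∑ i, ∑ j ∈ Finset.Ioi i, w i j * ∑ k, (Z i k - Z j k) ^ 2
    + γc / 2 * ∑ i, ∑ j ∈ Finset.Ioi i, wt i j * ∑ k, (Z k i - Z k j) ^ 2

/-- The BMC objective `F(Z) = (1/2) ∑_{(i,j) ∈ Ω} (X i j - Z i j)² + J(Z)`. -/
noncomputable def objF {n p : ℕ} (Ω : Finset (Fin n × Fin p)) (X : Matrix (Fin n) (Fin p) ℝ)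
    (γr γc : ℝ) (w : Fin n → Fin n → ℝ) (wt : Fin p → Fin p → ℝ)
    (Z : Matrix (Fin n) (Fin p) ℝ) : ℝ :=
  (1 / 2) * ∑ q ∈ Ω, (X q.1 q.2 - Z q.1 q.2) ^ 2 + Jpen γr γc w wt Z

lemma exists_pos_mul_sq_norm_le {E : Type*} [NormedAddCommGroup E] [NormedSpace ℝ E]
    [ProperSpace E] {q : E → ℝ} (hq : Continuous q)
    (hsmul : ∀ (a : ℝ) x, q (a • x) = a ^ 2 * q x) (hpos : ∀ x, x ≠ 0 → 0 < q x) :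
    ∃ c > 0, ∀ x, c * ‖x‖ ^ 2 ≤ q x := by
  have hq0 : q 0 = 0 := by simpa using hsmul 0 0
  rcases subsingleton_or_nontrivial E with _ | _
  · exact ⟨1, one_pos, fun x => by simp [Subsingleton.elim x 0, hq0]⟩
  obtain ⟨x₀, hx₀, hmin⟩ := (isCompact_sphere (0 : E) 1).exists_isMinOn
    (NormedSpace.sphere_nonempty.mpr zero_le_one) hq.continuousOn
  refine ⟨q x₀, hpos x₀ (ne_zero_of_mem_unit_sphere ⟨x₀, hx₀⟩), fun x => ?_⟩
  rcases eq_or_ne x 0 with rfl | hx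
  · simp [hq0]
  have hnx : 0 < ‖x‖ := norm_pos_iff.mpr hx
  have hunit : q x₀ ≤ q (‖x‖⁻¹ • x) := hmin (by simp [norm_smul, hnx.ne'])
  rw [hsmul, inv_pow, inv_mul_eq_div, le_div_iff₀ (by positivity)] at hunit
  exact hunit

open Filter in
lemma exists_forall_le_of_mul_sq_norm_le {E : Type*} [NormedAddCommGroup E] [ProperSpace E]
    {f : E → ℝ} (hf : Continuous f) {c d : ℝ} (hc : 0 < c)
    (h : ∀ x, c * ‖x‖ ^ 2 - d ≤ f x) : ∃ x, ∀ y, f x ≤ f y := by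
  refine hf.exists_forall_le (tendsto_atTop_mono h ?_)
  exact tendsto_atTop_add_const_right _ (-d)
    (((tendsto_pow_atTop two_ne_zero).comp tendsto_norm_cocompact_atTop).const_mul_atTop hc)

lemma eq_of_forall_le_of_parallelogram {V : Type*} [AddCommGroup V] [Module ℝ V] {f q : V → ℝ}
    (hpar : ∀ x y, f x + f y = 2 * f (midpoint ℝ x y) + q (x - y) / 2)
    (hpos : ∀ x, x ≠ 0 → 0 < q x) {x y : V} (hx : ∀ z, f x ≤ f z) (hy : ∀ z, f y ≤ f z) :
    x = y := by
  by_contra hxy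
  have := hpos (x - y) (sub_ne_zero.mpr hxy)
  linarith [hpar x y, hx (midpoint ℝ x y), hy x]

lemma graphOf_adj_iff {n : ℕ} {w : Fin n → Fin n → ℝ} (hsymm : ∀ i j, w i j = w j i)
    {i j : Fin n} : (graphOf w).Adj i j ↔ i ≠ j ∧ 0 < w i j := by
  simp [graphOf, hsymm j i]

lemma graphOf_reachable_of_pos {n : ℕ} {w : Fin n → Fin n → ℝ} {i j : Fin n} (h : 0 < w i j) :
    (graphOf w).Reachable i j := by
  rcases eq_or_ne i j with rfl | hij
  · rfl
  · exact SimpleGraph.Adj.reachable (by simp [graphOf, hij, h])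

section Dirichlet

variable {m q : ℕ} {w : Fin m → Fin m → ℝ}

def dirichletEnergy (w : Fin m → Fin m → ℝ) (E : Matrix (Fin m) (Fin q) ℝ) : ℝ :=
  ∑ i, ∑ j ∈ Ioi i, w i j * ∑ k, (E i k - E j k) ^ 2

lemma dirichletEnergy_nonneg (hw : ∀ i j, 0 ≤ w i j) (E : Matrix (Fin m) (Fin q) ℝ) :
    0 ≤ dirichletEnergy w E :=
  sum_nonneg fun _ _ => sum_nonneg fun _ _ =>
    mul_nonneg (hw _ _) (sum_nonneg fun _ _ => sq_nonneg _)

lemma dirichletEnergy_smul (a : ℝ) (E : Matrix (Fin m) (Fin q) ℝ) :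
    dirichletEnergy w (a • E) = a ^ 2 * dirichletEnergy w E := by
  simp only [dirichletEnergy, mul_sum, Matrix.smul_apply, smul_eq_mul]
  refine sum_congr rfl fun i _ => sum_congr rfl fun j _ => sum_congr rfl fun k _ => ?_
  ring

lemma dirichletEnergy_parallelogram (E F : Matrix (Fin m) (Fin q) ℝ) :
    dirichletEnergy w E + dirichletEnergy w F
      = 2 * dirichletEnergy w ((2⁻¹ : ℝ) • (E + F)) + dirichletEnergy w (E - F) / 2 := by
  simp only [dirichletEnergy, mul_sum, sum_div, ← sum_add_distrib, Matrix.smul_apply,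
    Matrix.add_apply, Matrix.sub_apply, smul_eq_mul]
  refine sum_congr rfl fun i _ => sum_congr rfl fun j _ => sum_congr rfl fun k _ => ?_
  ring

lemma dirichletEnergy_add_of_rows_eq (hw : ∀ i j, 0 ≤ w i j) {D : Matrix (Fin m) (Fin q) ℝ}
    (hD : ∀ i j, 0 < w i j → D i = D j) (E : Matrix (Fin m) (Fin q) ℝ) :
    dirichletEnergy w (E + D) = dirichletEnergy w E := by
  refine sum_congr rfl fun i _ => sum_congr rfl fun j _ => ?_
  rcases (hw i j).eq_or_lt with hij | hij
  · simp [← hij]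
  · simp [hD i j hij]

lemma row_eq_of_dirichletEnergy_eq_zero_of_lt (hw : ∀ i j, 0 ≤ w i j)
    {E : Matrix (Fin m) (Fin q) ℝ} (hE : dirichletEnergy w E = 0) {i j : Fin m} (hij : i < j)
    (hwij : 0 < w i j) : E i = E j := by
  have hterm (i j : Fin m) : 0 ≤ w i j * ∑ k, (E i k - E j k) ^ 2 :=
    mul_nonneg (hw i j) (sum_nonneg fun _ _ => sq_nonneg _)
  have hrow := (sum_eq_zero_iff_of_nonneg fun i _ => sum_nonneg fun j _ => hterm i j).mp hE i
    (mem_univ i)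
  have hsq := (sum_eq_zero_iff_of_nonneg fun j _ => hterm i j).mp hrow j (mem_Ioi.mpr hij)
  rw [mul_eq_zero, or_iff_right hwij.ne', sum_eq_zero_iff_of_nonneg fun _ _ => sq_nonneg _] at hsq
  funext k
  simpa [sub_eq_zero] using hsq k (mem_univ k)

lemma row_eq_of_dirichletEnergy_eq_zero (hsymm : ∀ i j, w i j = w j i)
    (hw : ∀ i j, 0 ≤ w i j) {E : Matrix (Fin m) (Fin q) ℝ} (hE : dirichletEnergy w E = 0)
    {i j : Fin m} (hij : (graphOf w).Reachable i j) : E i = E j := by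
  obtain ⟨walk⟩ := hij
  induction walk with
  | nil => rfl
  | @cons u v _ hadj _ ih =>
    obtain ⟨huv, hpos⟩ := (graphOf_adj_iff hsymm).mp hadj
    refine Eq.trans ?_ ih
    rcases huv.lt_or_gt with h | h
    · exact row_eq_of_dirichletEnergy_eq_zero_of_lt hw hE h hpos
    · exact (row_eq_of_dirichletEnergy_eq_zero_of_lt hw hE h (hsymm u v ▸ hpos)).symm

end Dirichlet

section Objective

variable {n p : ℕ} {Ω : Finset (Fin n × Fin p)} {X : Matrix (Fin n) (Fin p) ℝ} {γr γc : ℝ}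
  {w : Fin n → Fin n → ℝ} {wt : Fin p → Fin p → ℝ}

lemma objF_eq_dirichletEnergy (Z : Matrix (Fin n) (Fin p) ℝ) :
    objF Ω X γr γc w wt Z = 1 / 2 * ∑ q ∈ Ω, (X q.1 q.2 - Z q.1 q.2) ^ 2
      + (γr / 2 * dirichletEnergy w Z + γc / 2 * dirichletEnergy wt Zᵀ) :=
  rfl

lemma continuous_objF : Continuous (objF Ω X γr γc w wt) := by
  unfold objF Jpen
  fun_prop

lemma objF_zero_smul (a : ℝ) (D : Matrix (Fin n) (Fin p) ℝ) :
    objF Ω 0 γr γc w wt (a • D) = a ^ 2 * objF Ω 0 γr γc w wt D := by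
  have hfit : ∑ q ∈ Ω, ((0 : Matrix (Fin n) (Fin p) ℝ) q.1 q.2 - (a • D) q.1 q.2) ^ 2
      = a ^ 2 * ∑ q ∈ Ω, ((0 : Matrix (Fin n) (Fin p) ℝ) q.1 q.2 - D q.1 q.2) ^ 2 := by
    rw [mul_sum]
    refine sum_congr rfl fun q _ => ?_
    simp only [Matrix.zero_apply, Matrix.smul_apply, smul_eq_mul]
    ring
  rw [objF_eq_dirichletEnergy, objF_eq_dirichletEnergy, hfit, transpose_smul,
    dirichletEnergy_smul, dirichletEnergy_smul]
  ring

lemma objF_parallelogram (Z₁ Z₂ : Matrix (Fin n) (Fin p) ℝ) :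
    objF Ω X γr γc w wt Z₁ + objF Ω X γr γc w wt Z₂
      = 2 * objF Ω X γr γc w wt (midpoint ℝ Z₁ Z₂) + objF Ω 0 γr γc w wt (Z₁ - Z₂) / 2 := by
  have hfit : ∑ q ∈ Ω, (X q.1 q.2 - Z₁ q.1 q.2) ^ 2 + ∑ q ∈ Ω, (X q.1 q.2 - Z₂ q.1 q.2) ^ 2
      = 2 * ∑ q ∈ Ω, (X q.1 q.2 - ((2⁻¹ : ℝ) • (Z₁ + Z₂)) q.1 q.2) ^ 2
        + (∑ q ∈ Ω, ((0 : Matrix (Fin n) (Fin p) ℝ) q.1 q.2 - (Z₁ - Z₂) q.1 q.2) ^ 2) / 2 := by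
    rw [mul_sum, sum_div, ← sum_add_distrib, ← sum_add_distrib]
    refine sum_congr rfl fun q _ => ?_
    simp only [Matrix.zero_apply, Matrix.smul_apply, Matrix.add_apply, Matrix.sub_apply,
      smul_eq_mul]
    ring
  rw [midpoint_eq_smul_add, invOf_eq_inv]
  simp only [objF_eq_dirichletEnergy, transpose_smul, transpose_add, transpose_sub]
  linear_combination (1 / 2 : ℝ) * hfit + γr / 2 * dirichletEnergy_parallelogram (w := w) Z₁ Z₂
    + γc / 2 * dirichletEnergy_parallelogram (w := wt) Z₁ᵀ Z₂ᵀ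

lemma objF_nonneg (hγr : 0 ≤ γr) (hγc : 0 ≤ γc) (hw : ∀ i j, 0 ≤ w i j)
    (hwt : ∀ i j, 0 ≤ wt i j) (Z : Matrix (Fin n) (Fin p) ℝ) : 0 ≤ objF Ω X γr γc w wt Z := by
  have hrow := dirichletEnergy_nonneg hw Z
  have hcol := dirichletEnergy_nonneg hwt Zᵀ
  rw [objF_eq_dirichletEnergy]
  positivity

lemma objF_zero_le (hγr : 0 ≤ γr) (hγc : 0 ≤ γc) (hw : ∀ i j, 0 ≤ w i j)
    (hwt : ∀ i j, 0 ≤ wt i j) (Z : Matrix (Fin n) (Fin p) ℝ) :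
    objF Ω 0 γr γc w wt Z ≤ 2 * objF Ω X γr γc w wt Z + ∑ q ∈ Ω, X q.1 q.2 ^ 2 := by
  have hfit : ∑ q ∈ Ω, ((0 : Matrix (Fin n) (Fin p) ℝ) q.1 q.2 - Z q.1 q.2) ^ 2
      ≤ 2 * ∑ q ∈ Ω, (X q.1 q.2 - Z q.1 q.2) ^ 2 + 2 * ∑ q ∈ Ω, X q.1 q.2 ^ 2 := by
    rw [mul_sum, mul_sum, ← sum_add_distrib]
    refine sum_le_sum fun q _ => ?_
    simp only [Matrix.zero_apply]
    nlinarith [sq_nonneg (2 * X q.1 q.2 - Z q.1 q.2)]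
  have hrow := mul_nonneg (by positivity : 0 ≤ γr / 2) (dirichletEnergy_nonneg hw Z)
  have hcol := mul_nonneg (by positivity : 0 ≤ γc / 2) (dirichletEnergy_nonneg hwt Zᵀ)
  rw [objF_eq_dirichletEnergy, objF_eq_dirichletEnergy]
  linarith

lemma eq_zero_of_objF_zero_eq_zero (hγr : 0 < γr) (hγc : 0 < γc)
    (hsymm : ∀ i j, w i j = w j i) (hw : ∀ i j, 0 ≤ w i j)
    (hsymm' : ∀ i j, wt i j = wt j i) (hwt : ∀ i j, 0 ≤ wt i j)
    (hΩ : ∀ i j, ∃ q ∈ Ω, (graphOf w).Reachable q.1 i ∧ (graphOf wt).Reachable q.2 j)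
    {D : Matrix (Fin n) (Fin p) ℝ} (hD : objF Ω 0 γr γc w wt D = 0) : D = 0 := by
  have hrow := dirichletEnergy_nonneg hw D
  have hcol := dirichletEnergy_nonneg hwt Dᵀ
  rw [objF_eq_dirichletEnergy, add_eq_zero_iff_of_nonneg (by positivity) (by positivity),
    add_eq_zero_iff_of_nonneg (by positivity) (by positivity)] at hD
  obtain ⟨hfit0, hrow0, hcol0⟩ := hD
  rw [mul_eq_zero, or_iff_right (by norm_num), sum_eq_zero_iff_of_nonneg fun _ _ => sq_nonneg _]
    at hfit0
  rw [mul_eq_zero, or_iff_right (by positivity)] at hrow0 hcol0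
  ext i j
  obtain ⟨q, hq, hi, hj⟩ := hΩ i j
  calc D i j = D q.1 j := by rw [row_eq_of_dirichletEnergy_eq_zero hsymm hw hrow0 hi]
    _ = D q.1 q.2 := congrFun (row_eq_of_dirichletEnergy_eq_zero hsymm' hwt hcol0 hj).symm q.1
    _ = 0 := by simpa using hfit0 q hq

lemma objF_add_vecMulVec_chi (hw : ∀ i j, 0 ≤ w i j) (hwt : ∀ i j, 0 ≤ wt i j)
    {S : Set (Fin n)} {T : Set (Fin p)} (hS : ∀ i j, 0 < w i j → (i ∈ S ↔ j ∈ S))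
    (hT : ∀ i j, 0 < wt i j → (i ∈ T ↔ j ∈ T)) (hΩ : ∀ q ∈ Ω, q.1 ∈ S → q.2 ∉ T)
    (Z : Matrix (Fin n) (Fin p) ℝ) :
    objF Ω X γr γc w wt (Z + vecMulVec (chi S) (chi T)) = objF Ω X γr γc w wt Z := by
  have hchi {k : ℕ} {U : Set (Fin k)} {i j : Fin k} (h : i ∈ U ↔ j ∈ U) : chi U i = chi U j := by
    by_cases hi : i ∈ U
    · simp [chi, hi, h.mp hi]
    · simp [chi, hi, mt h.mpr hi]
  have hfit : ∀ q ∈ Ω, vecMulVec (chi S) (chi T) q.1 q.2 = 0 := fun q hq => by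
    by_cases h : q.1 ∈ S <;> simp [vecMulVec_apply, chi, h, hΩ q hq]
  have hrows : ∀ i j, 0 < w i j → vecMulVec (chi S) (chi T) i = vecMulVec (chi S) (chi T) j :=
    fun i j h => by ext k; simp [vecMulVec_apply, hchi (hS i j h)]
  have hcols : ∀ i j, 0 < wt i j → vecMulVec (chi T) (chi S) i = vecMulVec (chi T) (chi S) j :=
    fun i j h => by ext k; simp [vecMulVec_apply, hchi (hT i j h)]
  rw [objF_eq_dirichletEnergy, objF_eq_dirichletEnergy, transpose_add, transpose_vecMulVec,
    dirichletEnergy_add_of_rows_eq hw hrows, dirichletEnergy_add_of_rows_eq hwt hcols]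
  congr 2
  exact sum_congr rfl fun q hq => by rw [Matrix.add_apply, hfit q hq, add_zero]

lemma exists_mem_prod_of_existsUnique_minimizer (hw : ∀ i j, 0 ≤ w i j)
    (hwt : ∀ i j, 0 ≤ wt i j)
    (hmin : ∃! Z : Matrix (Fin n) (Fin p) ℝ,
      ∀ Z', objF Ω X γr γc w wt Z ≤ objF Ω X γr γc w wt Z')
    {S : Set (Fin n)} {T : Set (Fin p)} (hS : ∀ i j, 0 < w i j → (i ∈ S ↔ j ∈ S))
    (hT : ∀ i j, 0 < wt i j → (i ∈ T ↔ j ∈ T)) {i : Fin n} {j : Fin p} (hi : i ∈ S)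
    (hj : j ∈ T) : ∃ q ∈ Ω, q.1 ∈ S ∧ q.2 ∈ T := by
  by_contra! hΩ
  obtain ⟨Z, hZ, huniq⟩ := hmin
  have hshift := objF_add_vecMulVec_chi (X := X) (γr := γr) (γc := γc) hw hwt hS hT hΩ Z
  have hzero : vecMulVec (chi S) (chi T) = 0 :=
    add_eq_left.mp (huniq _ fun Z' => hshift ▸ hZ Z')
  simpa [vecMulVec_apply, chi, hi, hj] using congrFun (congrFun hzero i) j

theorem existsUnique_minimizer_objF (hγr : 0 < γr) (hγc : 0 < γc)
    (hsymm : ∀ i j, w i j = w j i) (hw : ∀ i j, 0 ≤ w i j)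
    (hsymm' : ∀ i j, wt i j = wt j i) (hwt : ∀ i j, 0 ≤ wt i j)
    (hΩ : ∀ i j, ∃ q ∈ Ω, (graphOf w).Reachable q.1 i ∧ (graphOf wt).Reachable q.2 j) :
    ∃! Z : Matrix (Fin n) (Fin p) ℝ, ∀ Z', objF Ω X γr γc w wt Z ≤ objF Ω X γr γc w wt Z' := by
  have hpos : ∀ D, D ≠ 0 → 0 < objF Ω 0 γr γc w wt D := fun D hD =>
    (objF_nonneg hγr.le hγc.le hw hwt D).lt_of_ne'
      (mt (eq_zero_of_objF_zero_eq_zero hγr hγc hsymm hw hsymm' hwt hΩ) hD)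
  obtain ⟨c, hc, hcq⟩ := exists_pos_mul_sq_norm_le (E := Fin n → Fin p → ℝ)
    continuous_objF objF_zero_smul hpos
  have hcoercive : ∀ Z : Fin n → Fin p → ℝ,
      c / 2 * ‖Z‖ ^ 2 - (∑ q ∈ Ω, X q.1 q.2 ^ 2) / 2 ≤ objF Ω X γr γc w wt Z := fun Z => by
    linarith [hcq Z, objF_zero_le (Ω := Ω) (X := X) hγr.le hγc.le hw hwt Z]
  obtain ⟨Z, hZ⟩ := exists_forall_le_of_mul_sq_norm_le continuous_objF (half_pos hc) hcoercive
  exact ⟨Z, hZ, fun Y hY => eq_of_forall_le_of_parallelogram objF_parallelogram hpos hY hZ⟩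

end Objective

theorem bmc_unique_minimizer_iff_general {n p R C : ℕ} (Ω : Finset (Fin n × Fin p))
    (X : Matrix (Fin n) (Fin p) ℝ) (γr γc : ℝ) (hγr : 0 < γr) (hγc : 0 < γc)
    (w : Fin n → Fin n → ℝ) (wt : Fin p → Fin p → ℝ)
    (hsymm : ∀ i j, w i j = w j i) (hnonneg : ∀ i j, 0 ≤ w i j)
    (hsymm' : ∀ i j, wt i j = wt j i) (hnonneg' : ∀ i j, 0 ≤ wt i j)
    (A : Fin R → Set (Fin n))
    (eA : (graphOf w).ConnectedComponent ≃ Fin R)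
    (hA : ∀ r, A r = {v | eA ((graphOf w).connectedComponentMk v) = r})
    (B : Fin C → Set (Fin p))
    (eB : (graphOf wt).ConnectedComponent ≃ Fin C)
    (hB : ∀ c, B c = {v | eB ((graphOf wt).connectedComponentMk v) = c}) :
    (∃! Z : Matrix (Fin n) (Fin p) ℝ,
        ∀ Z' : Matrix (Fin n) (Fin p) ℝ, objF Ω X γr γc w wt Z ≤ objF Ω X γr γc w wt Z')
      ↔ (∀ r c, ∃ q ∈ Ω, q.1 ∈ A r ∧ q.2 ∈ B c) := by
  have memA (r) (i : Fin n) : i ∈ A r ↔ eA ((graphOf w).connectedComponentMk i) = r := by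
    rw [hA]; rfl
  have memB (c) (j : Fin p) : j ∈ B c ↔ eB ((graphOf wt).connectedComponentMk j) = c := by
    rw [hB]; rfl
  constructor
  · intro hmin r c
    obtain ⟨i, hi⟩ := (eA.symm r).exists_rep
    obtain ⟨j, hj⟩ := (eB.symm c).exists_rep
    have hiA : i ∈ A r := (memA r i).mpr (eA.eq_symm_apply.mp hi)
    have hjB : j ∈ B c := (memB c j).mpr (eB.eq_symm_apply.mp hj)
    refine exists_mem_prod_of_existsUnique_minimizer hnonneg hnonneg' hmin
      (fun i i' h => ?_) (fun j j' h => ?_) hiA hjB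
    · simp only [memA, SimpleGraph.ConnectedComponent.sound (graphOf_reachable_of_pos h)]
    · simp only [memB, SimpleGraph.ConnectedComponent.sound (graphOf_reachable_of_pos h)]
  · intro hobs
    refine existsUnique_minimizer_objF hγr hγc hsymm hnonneg hsymm' hnonneg' fun i j => ?_
    obtain ⟨q, hq, hqi, hqj⟩ := hobs (eA ((graphOf w).connectedComponentMk i))
      (eB ((graphOf wt).connectedComponentMk j))
    rw [memA, eA.apply_eq_iff_eq] at hqi
    rw [memB, eB.apply_eq_iff_eq] at hqj
    exact ⟨q, hq, SimpleGraph.ConnectedComponent.eq.mp hqi,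
      SimpleGraph.ConnectedComponent.eq.mp hqj⟩

/-- Theorem 1, uniqueness: for `γr, γc > 0`, the BMC objective `F` has a
unique global minimizer iff Assumption 1 holds (every bicluster `A_r × B_c` contains an
observed entry). -/
theorem bmc_unique_minimizer_iff {n p R C : ℕ} (Ω : Finset (Fin n × Fin p))
    (X : Matrix (Fin n) (Fin p) ℝ) (γr γc : ℝ) (hγr : 0 < γr) (hγc : 0 < γc)
    (w : Fin n → Fin n → ℝ) (wt : Fin p → Fin p → ℝ)
    (hsymm : ∀ i j, w i j = w j i) (hnonneg : ∀ i j, 0 ≤ w i j)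
    (hdiag : ∀ i, w i i = 0)
    (hsymm' : ∀ i j, wt i j = wt j i) (hnonneg' : ∀ i j, 0 ≤ wt i j)
    (hdiag' : ∀ i, wt i i = 0)
    (A : Fin R → Set (Fin n))
    (eA : (graphOf w).ConnectedComponent ≃ Fin R)
    (hA : ∀ r, A r = {v | eA ((graphOf w).connectedComponentMk v) = r})
    (B : Fin C → Set (Fin p))
    (eB : (graphOf wt).ConnectedComponent ≃ Fin C)
    (hB : ∀ c, B c = {v | eB ((graphOf wt).connectedComponentMk v) = c}) :
    (∃! Z : Matrix (Fin n) (Fin p) ℝ,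
        ∀ Z' : Matrix (Fin n) (Fin p) ℝ, objF Ω X γr γc w wt Z ≤ objF Ω X γr γc w wt Z')
      ↔ (∀ r c, ∃ q ∈ Ω, q.1 ∈ A r ∧ q.2 ∈ B c) :=
  bmc_unique_minimizer_iff_general Ω X γr γc hγr hγc w wt hsymm hnonneg hsymm' hnonneg' A eA hA B eB
    hB
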